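/- arXiv:0910.2370 — 3 statements merged into one kernel-verified Lean document; each statement's English description precedes it below -/
import Mathlib

section
/- Let g ∈ F⟨Z⟩ be a homogeneous polynomial of degree d computed by an algebraic branching program P with S vertices, with source vertex 1 and sink vertex S, and let A_1,...,A_n ∈ M_S(F) be the transfer matrices of P (A_i(k,l) is the coefficient of z_i in the linear form labeling edge (k,l), or 0 if there is no edge). Then for every homogeneous f ∈ F⟨Z⟩ of degree d, the (1,S) entry of the matrix f(A_1 z_1,...,A_n z_n) ∈ M_S(F⟨Z⟩) equals the Hadamard product f∘g. -/
/-- Hadamard (coefficientwise) product on `F⟨Z⟩`. -/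
noncomputable def hadamard {F : Type*} [CommRing F] {X : Type*}
    (f g : MonoidAlgebra F (FreeMonoid X)) : MonoidAlgebra F (FreeMonoid X) :=
  MonoidAlgebra.ofCoeff (Finsupp.zipWith (· * ·) (mul_zero 0) f.coeff g.coeff)

/-- Evaluation of a noncommutative polynomial at `A_1 z_1, …, A_n z_n` in `M_S(F⟨Z⟩)`. -/
noncomputable def evalAtMatVars {F : Type*} [Field F] {n S : ℕ}
    (A : Fin n → Matrix (Fin S) (Fin S) F) :
    MonoidAlgebra F (FreeMonoid (Fin n)) →ₐ[F]
      Matrix (Fin S) (Fin S) (MonoidAlgebra F (FreeMonoid (Fin n))) :=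
  MonoidAlgebra.lift F _ (FreeMonoid (Fin n))
    (FreeMonoid.lift fun i =>
      (A i).map fun c =>
        (MonoidAlgebra.ofCoeff (Finsupp.single (FreeMonoid.of i) c) : MonoidAlgebra F (FreeMonoid (Fin n))))

/-! Substituting `A_i z_i` for `z_i` sends a word `w` to the matrix `A_w` with every entry
tagged by the monomial `w`. Hence the coefficient of `w` in the `(1,S)` entry of
`f(A_1 z_1,…,A_n z_n)` is `f(w) · A_w(1,S)`, which is `f(w) g(w)` whenever `f(w) ≠ 0`,
since then `w` has length `d`. -/

open MonoidAlgebra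

theorem Matrix.map_single_mul_map_single {R M ι : Type*} [Semiring R] [Mul M] [Fintype ι]
    (B C : Matrix ι ι R) (m m' : M) :
    B.map (MonoidAlgebra.single m) * C.map (MonoidAlgebra.single m')
      = (B * C).map (MonoidAlgebra.single (m * m')) := by
  ext i j : 1
  simp only [Matrix.mul_apply, Matrix.map_apply, single_mul_single]
  exact (map_sum (singleAddHom (R := R) (m * m')) _ _).symm

theorem FreeMonoid.lift_map_single {R α ι : Type*} [Semiring R] [Fintype ι] [DecidableEq ι]
    (B : α → Matrix ι ι R) (w : FreeMonoid α) :
    FreeMonoid.lift (fun a => (B a).map (single (FreeMonoid.of a))) w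
      = (FreeMonoid.lift B w).map (single w) := by
  induction w using FreeMonoid.inductionOn' with
  | one => simp only [map_one]; exact (Matrix.map_one _ (single_zero 1) rfl).symm
  | of_mul a w ih =>
    rw [map_mul, map_mul, ih, FreeMonoid.lift_eval_of, FreeMonoid.lift_eval_of,
      Matrix.map_single_mul_map_single]

theorem evalAtMatVars_single {F : Type*} [Field F] {n S : ℕ}
    (A : Fin n → Matrix (Fin S) (Fin S) F) (w : FreeMonoid (Fin n)) (c : F) :
    evalAtMatVars A (single w c) = c • (FreeMonoid.lift A w).map (single w) := by
  rw [evalAtMatVars, lift_single]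
  exact congrArg (c • ·) (FreeMonoid.lift_map_single A w)

theorem coeff_evalAtMatVars_apply {F : Type*} [Field F] {n S : ℕ}
    (A : Fin n → Matrix (Fin S) (Fin S) F) (f : MonoidAlgebra F (FreeMonoid (Fin n)))
    (p q : Fin S) (w : FreeMonoid (Fin n)) :
    (evalAtMatVars A f p q).coeff w = f.coeff w * FreeMonoid.lift A w p q := by
  induction f using MonoidAlgebra.induction_linear with
  | zero => simp
  | add f g hf hg => simp [coeff_add, hf, hg, add_mul]
  | single v c =>
    rw [evalAtMatVars_single, Matrix.smul_apply, Matrix.map_apply, smul_single', coeff_single,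
      coeff_single]
    by_cases h : v = w
    · rw [h, Finsupp.single_eq_same, Finsupp.single_eq_same]
    · rw [Finsupp.single_eq_of_ne (Ne.symm h), Finsupp.single_eq_of_ne (Ne.symm h), zero_mul]

/-- If `g` is homogeneous of degree `d` and its coefficients are computed by the
transfer matrices `A_1,…,A_n` of an ABP (i.e. `g(m) = (A_{i_1}⋯A_{i_d})(1,S)` for each
word `m = z_{i_1}⋯z_{i_d}` of length `d`), then for any homogeneous `f` of degree `d`,
the `(1,S)` entry of `f(A_1 z_1,…,A_n z_n)` is the Hadamard product `f ∘ g`. -/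
theorem entry_evalAtMatVars_eq_hadamard {F : Type*} [Field F] {n S d : ℕ} (hS : 0 < S)
    (f g : MonoidAlgebra F (FreeMonoid (Fin n)))
    (hf : ∀ m ∈ Finsupp.support f.coeff, (FreeMonoid.toList m).length = d)
    (A : Fin n → Matrix (Fin S) (Fin S) F)
    (hg : ∀ m : FreeMonoid (Fin n), (FreeMonoid.toList m).length = d →
      g.coeff m = ((FreeMonoid.toList m).map A).prod ⟨0, hS⟩ ⟨S - 1, by omega⟩) :
    evalAtMatVars A f ⟨0, hS⟩ ⟨S - 1, by omega⟩ = hadamard f g := by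
  ext w
  rw [coeff_evalAtMatVars_apply, hadamard, coeff_ofCoeff, Finsupp.zipWith_apply]
  by_cases hw : f.coeff w = 0
  · rw [hw, zero_mul, zero_mul]
  · rw [hg w (hf w (Finsupp.mem_support_iff.mpr hw)), FreeMonoid.lift_apply]
end

section
/- The Hadamard product of the Cayley determinant Cdet_{2n}(X) with the polynomial F = Σ_{(j_1,...,j_n) ∈ [n]^n} Π_{i=1}^n x_{2i-1, j_i} x_{2i, n+j_i} equals sgn(ρ(1_n)) · Σ_{π ∈ S_n} x_{1,π(1)} x_{2,n+π(1)} ··· x_{2n-1,π(n)} x_{2n,n+π(n)}. -/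
/-- `σ ∈ S_{2n}` is the interleaving `ρ(π)` of `π ∈ S_n`. -/
def Interleaves (n : ℕ) (π : Equiv.Perm (Fin n)) (σ : Equiv.Perm (Fin (2 * n))) : Prop :=
  ∀ i : Fin n,
    σ ⟨2 * i.val, by have := i.isLt; omega⟩ =
      ⟨(π i).val, by have := (π i).isLt; omega⟩ ∧
    σ ⟨2 * i.val + 1, by have := i.isLt; omega⟩ =
      ⟨n + (π i).val, by have := (π i).isLt; omega⟩

/-- The Cayley determinant `Cdet_n(X)` in the free algebra on the `x_{ij}`. -/
noncomputable def Cdet (F : Type*) [Field F] (n : ℕ) :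
    MonoidAlgebra F (FreeMonoid (Fin n × Fin n)) :=
  ∑ σ : Equiv.Perm (Fin n),
    MonoidAlgebra.single ((List.ofFn fun i : Fin n => FreeMonoid.of (i, σ i)).prod)
      (((Equiv.Perm.sign σ : ℤ) : F))

/-- The polynomial `F = Σ_{(j_1,…,j_n) ∈ [n]^n} Π_{i=1}^n x_{2i-1,j_i} x_{2i,n+j_i}`. -/
noncomputable def interleavePoly (F : Type*) [Field F] (n : ℕ) :
    MonoidAlgebra F (FreeMonoid (Fin (2 * n) × Fin (2 * n))) :=
  ∑ j : Fin n → Fin n,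
    MonoidAlgebra.single
      ((List.ofFn fun i : Fin n =>
        FreeMonoid.of ((⟨2 * i.val, by have := i.isLt; omega⟩ : Fin (2 * n)),
                       (⟨(j i).val, by have := (j i).isLt; omega⟩ : Fin (2 * n))) *
        FreeMonoid.of ((⟨2 * i.val + 1, by have := i.isLt; omega⟩ : Fin (2 * n)),
                       (⟨n + (j i).val, by have := (j i).isLt; omega⟩ : Fin (2 * n)))).prod)
      (1 : F)

/-!
A word survives in `Cdet_{2n} ∘ F` iff it is `x_{1,σ(1)} ⋯ x_{2n,σ(2n)}` for a permutation `σ`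
with `σ(2i-1) = j_i`, `σ(2i) = n + j_i` for some `j`; injectivity of `σ` forces `j` to be a
permutation `π`, and then `σ = ρ(π)`. Finally `ρ(π) = (π ⊕ π) ∘ ρ(1_n)` with `π ⊕ π` even, so every
surviving coefficient is `sgn ρ(1_n)`.
-/

theorem List.prod_ofFn_two_mul {M : Type*} [Monoid M] {n : ℕ} (g : Fin (2 * n) → M) :
    (List.ofFn g).prod =
      (List.ofFn fun i : Fin n => g ⟨2 * i, by omega⟩ * g ⟨2 * i + 1, by omega⟩).prod := by
  rw [List.ofFn_mul', List.prod_flatten, List.map_ofFn]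
  congr 2
  ext i
  simp [List.ofFn_succ]

theorem FreeMonoid.prod_map_of {α : Type*} (l : List α) : (l.map of).prod = ofList l := by
  induction l <;> simp [*, ofList_cons]

section GraphWord

variable {m : ℕ} {α : Type*}

def graphWord (f : Fin m → α) : FreeMonoid (Fin m × α) :=
  (List.ofFn fun i => FreeMonoid.of (i, f i)).prod

theorem graphWord_eq_ofList (f : Fin m → α) :
    graphWord f = FreeMonoid.ofList (List.ofFn fun i => (i, f i)) := by
  rw [← FreeMonoid.prod_map_of, List.map_ofFn]
  rfl

theorem graphWord_injective :
    Function.Injective (graphWord : (Fin m → α) → FreeMonoid (Fin m × α)) := by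
  intro f g h
  simp only [graphWord_eq_ofList, EmbeddingLike.apply_eq_iff_eq, List.ofFn_inj, funext_iff,
    Prod.mk.injEq, true_and] at h
  exact funext h

end GraphWord

section Hadamard

variable {F : Type*} [CommRing F] {X : Type*}

theorem hadamard_coeff (f g : MonoidAlgebra F (FreeMonoid X)) (w : FreeMonoid X) :
    (hadamard f g).coeff w = f.coeff w * g.coeff w :=
  rfl

theorem hadamard_sum_sum {ι κ : Type*} (s : Finset ι) (t : Finset κ)
    (f : ι → MonoidAlgebra F (FreeMonoid X)) (g : κ → MonoidAlgebra F (FreeMonoid X)) :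
    hadamard (∑ a ∈ s, f a) (∑ b ∈ t, g b) = ∑ a ∈ s, ∑ b ∈ t, hadamard (f a) (g b) := by
  ext w
  simp only [hadamard_coeff, MonoidAlgebra.coeff_sum, Finset.sum_apply', Finset.sum_mul_sum]

theorem hadamard_single_single [DecidableEq (FreeMonoid X)] (u v : FreeMonoid X) (a b : F) :
    hadamard (MonoidAlgebra.single u a) (MonoidAlgebra.single v b) =
      if u = v then MonoidAlgebra.single u (a * b) else 0 := by
  ext w
  rw [hadamard_coeff, apply_ite (fun f : MonoidAlgebra F (FreeMonoid X) => f.coeff w)]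
  simp only [MonoidAlgebra.coeff_single, MonoidAlgebra.coeff_zero, Finsupp.single_apply,
    Finsupp.zero_apply]
  split_ifs <;> simp_all

end Hadamard

section Interleave

variable {n : ℕ}

/-- `2i ↦ j i` and `2i + 1 ↦ n + j i` (0-indexed), i.e. `ρ(j)` when `j` is a permutation. -/
def interleave (j : Fin n → Fin n) (k : Fin (2 * n)) : Fin (2 * n) :=
  finProdFinEquiv (⟨k % 2, Nat.mod_lt _ two_pos⟩, j ⟨k / 2, by omega⟩)

@[simp]
theorem interleave_two_mul (j : Fin n → Fin n) (i : Fin n) :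
    interleave j ⟨2 * i, by omega⟩ = ⟨j i, by omega⟩ := by
  ext
  simp [interleave]

@[simp]
theorem interleave_two_mul_add_one (j : Fin n → Fin n) (i : Fin n) :
    interleave j ⟨2 * i + 1, by omega⟩ = ⟨n + j i, by omega⟩ := by
  ext
  simp [interleave, Nat.add_mod, Nat.mul_add_div, add_comm n]

theorem injective_of_injective_interleave {j : Fin n → Fin n}
    (h : Function.Injective (interleave j)) : Function.Injective j := by
  intro a b hab
  have h2 : (⟨2 * a, by omega⟩ : Fin (2 * n)) = ⟨2 * b, by omega⟩ := h (by simp [hab])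
  exact Fin.ext (by simpa using h2)

theorem interleaves_iff {π : Equiv.Perm (Fin n)} {σ : Equiv.Perm (Fin (2 * n))} :
    Interleaves n π σ ↔ ⇑σ = interleave π := by
  refine ⟨fun h => funext fun k => ?_, fun h i => by simp [h]⟩
  obtain ⟨i, hi | hi⟩ := Nat.even_or_odd' k
  · rw [show k = ⟨2 * i, by omega⟩ from Fin.ext hi]
    exact (h ⟨i, by omega⟩).1.trans (interleave_two_mul _ ⟨i, by omega⟩).symm
  · rw [show k = ⟨2 * i + 1, by omega⟩ from Fin.ext hi]
    exact (h ⟨i, by omega⟩).2.trans (interleave_two_mul_add_one _ ⟨i, by omega⟩).symm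

/-- The block permutation `π ⊕ π` of `Fin (2n) ≃ Fin 2 × Fin n`. -/
def blockDiag (π : Equiv.Perm (Fin n)) : Equiv.Perm (Fin (2 * n)) :=
  finProdFinEquiv.permCongr (Equiv.prodCongrRight fun _ => π)

theorem sign_blockDiag (π : Equiv.Perm (Fin n)) : Equiv.Perm.sign (blockDiag π) = 1 := by
  rw [blockDiag, Equiv.Perm.sign_permCongr, Equiv.Perm.sign_prodCongrRight, Fin.prod_univ_two,
    Int.units_mul_self]

theorem blockDiag_comp_interleave (π : Equiv.Perm (Fin n)) (j : Fin n → Fin n) :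
    blockDiag π ∘ interleave j = interleave (π ∘ j) := by
  ext k
  simp [blockDiag, interleave, Equiv.permCongr_apply]

theorem Interleaves.sign_eq {π : Equiv.Perm (Fin n)} {σ τ : Equiv.Perm (Fin (2 * n))}
    (hσ : Interleaves n π σ) (hτ : Interleaves n 1 τ) :
    Equiv.Perm.sign σ = Equiv.Perm.sign τ := by
  have : σ = blockDiag π * τ := by
    ext1 k
    rw [interleaves_iff] at hσ hτ
    rw [Equiv.Perm.mul_apply, hσ, hτ, ← Function.comp_apply (f := blockDiag π),
      blockDiag_comp_interleave]
    rfl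
  rw [this, map_mul, sign_blockDiag, one_mul]

end Interleave

theorem Cdet_eq_sum_graphWord (F : Type*) [Field F] (m : ℕ) :
    Cdet F m = ∑ σ : Equiv.Perm (Fin m),
      MonoidAlgebra.single (graphWord σ) ((Equiv.Perm.sign σ : ℤ) : F) :=
  rfl

theorem interleavePoly_eq_sum_graphWord (F : Type*) [Field F] (n : ℕ) :
    interleavePoly F n = ∑ j : Fin n → Fin n,
      MonoidAlgebra.single (graphWord (interleave j)) (1 : F) := by
  refine Finset.sum_congr rfl fun j _ => ?_
  rw [graphWord, List.prod_ofFn_two_mul]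
  simp

theorem coe_eq_interleave_iff {n : ℕ} {ρ : Equiv.Perm (Fin n) → Equiv.Perm (Fin (2 * n))}
    (hρ : ∀ π, Interleaves n π (ρ π)) {σ : Equiv.Perm (Fin (2 * n))} {j : Fin n → Fin n} :
    ⇑σ = interleave j ↔ ∃ π, ρ π = σ ∧ ⇑π = j := by
  refine ⟨fun h => ?_, ?_⟩
  · have hj : Function.Bijective j :=
      Finite.injective_iff_bijective.mp (injective_of_injective_interleave (h ▸ σ.injective))
    refine ⟨Equiv.ofBijective j hj, DFunLike.coe_injective ?_, rfl⟩
    rw [h]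
    exact interleaves_iff.mp (hρ _)
  · rintro ⟨π, rfl, rfl⟩
    exact interleaves_iff.mp (hρ π)

/-- `Cdet_{2n} ∘ F = sgn(ρ(1_n)) · Σ_{π ∈ S_n} m_{ρ(π)}`. -/
theorem hadamard_Cdet_interleavePoly (F : Type*) [Field F] (n : ℕ)
    (ρ : Equiv.Perm (Fin n) → Equiv.Perm (Fin (2 * n)))
    (hρ : ∀ π, Interleaves n π (ρ π)) :
    hadamard (Cdet F (2 * n)) (interleavePoly F n) =
      ((Equiv.Perm.sign (ρ 1) : ℤ) : F) •
        ∑ π : Equiv.Perm (Fin n),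
          MonoidAlgebra.single
            ((List.ofFn fun i : Fin (2 * n) => FreeMonoid.of (i, ρ π i)).prod) (1 : F) := by
  classical
  have hsupport :
      (Finset.univ.filter fun p : Equiv.Perm (Fin (2 * n)) × (Fin n → Fin n) =>
        ⇑p.1 = interleave p.2) = Finset.univ.image fun π => (ρ π, ⇑π) := by
    ext ⟨σ, j⟩
    simp [coe_eq_interleave_iff hρ]
  rw [Cdet_eq_sum_graphWord, interleavePoly_eq_sum_graphWord, hadamard_sum_sum]
  simp only [hadamard_single_single, graphWord_injective.eq_iff, mul_one]
  rw [← Finset.sum_product', Finset.univ_product_univ, ← Finset.sum_filter, hsupport,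
    Finset.sum_image fun π _ π' _ h => DFunLike.coe_injective (congrArg Prod.snd h),
    Finset.smul_sum]
  refine Finset.sum_congr rfl fun π _ => ?_
  rw [MonoidAlgebra.smul_single, smul_eq_mul, mul_one, (hρ π).sign_eq (hρ 1)]
  rfl
end

section
/- Let n = 2^ℓ and m = 5ℓ. In the even real Clifford algebra CL_m there exist elements h_1,...,h_n, h'_1,...,h'_n and an idempotent e such that h_j h'_j = e for all j, h_j h'_k = 0 for all j ≠ k, and the norm satisfies |e|² = 1/2^ℓ, where |Σ_S c_S e_S|² = Σ_S c_S². -/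
/-- The real Clifford algebra `CL'_m` modelled concretely: an element is the
coefficient vector `(c_S)_{S ⊆ [m]}` of `Σ_S c_S e_S`; multiplication is determined by
`e_i² = 1`, `e_i e_j = -e_j e_i` (`i ≠ j`), which gives
`e_S e_T = (-1)^{#{(s,t) ∈ S×T : s > t}} e_{S ∆ T}`. -/
noncomputable def clMul {m : ℕ} (f g : Finset (Fin m) → ℝ) : Finset (Fin m) → ℝ :=
  fun U => ∑ S : Finset (Fin m), ∑ T : Finset (Fin m),
    if symmDiff S T = U then
      (-1 : ℝ) ^ (((S ×ˢ T).filter fun p => p.2 < p.1).card) * f S * g T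
    else 0

/-!
Split the `5ℓ` generators into `ℓ` blocks of five and, in block `i`, put
`σᵢ = e₀e₁e₂e₃` and `τᵢ = e₀e₁e₂e₄` (indices inside the block). Both are even, square to `1`,
anticommute with each other (their index sets meet in three elements), and commute with
everything from other blocks. Hence `e = ∏ᵢ (1 + σᵢ)/2 = 2^{-ℓ} ∑_A σ_A` is an idempotent with
`2^ℓ` coefficients equal to `2^{-ℓ}`, so `|e|² = 2^{-ℓ}`. With `τ_A = ∏_{i ∈ A} τᵢ`, put
`h_A = e τ_A` and `h'_A = τ_A e`; then `h_A h'_B = e τ_{A ∆ B} e`, and `e τ_C e = 0` for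
`C ≠ ∅`: for `i ∈ C`, `σᵢ` is absorbed by `e` on either side but anticommutes with `τ_C`.
-/

open Finset

open scoped symmDiff

theorem Finset.prod_symmDiff_of_mul_self {ι M : Type*} [DecidableEq ι] [CommMonoid M]
    {f : ι → M} (hf : ∀ i, f i * f i = 1) (s t : Finset ι) :
    ∏ i ∈ s ∆ t, f i = (∏ i ∈ s, f i) * ∏ i ∈ t, f i := by
  have hsq : (∏ i ∈ s ∩ t, f i) * ∏ i ∈ s ∩ t, f i = 1 := by
    rw [← prod_mul_distrib]; exact prod_eq_one fun i _ => hf i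
  rw [← prod_union_inter, ← sup_eq_union, ← symmDiff_sup_inf s t,
    sup_eq_union, prod_union (disjoint_symmDiff_inf s t), inf_eq_inter, mul_assoc, hsq, mul_one]

section Sign

variable {α : Type*} [LinearOrder α]

def cliffordSign (S T : Finset α) : ℝ := ∏ s ∈ S, ∏ t ∈ T, if t < s then -1 else 1

theorem cliffordSign_eq_neg_one_pow (S T : Finset α) :
    cliffordSign S T = (-1) ^ #{p ∈ S ×ˢ T | p.2 < p.1} := by
  rw [cliffordSign, ← prod_product (f := fun p : α × α => if p.2 < p.1 then (-1 : ℝ) else 1),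
    prod_ite, prod_const, prod_const_one, mul_one]

theorem ite_neg_one_mul_self (p : Prop) [Decidable p] :
    (if p then (-1 : ℝ) else 1) * (if p then -1 else 1) = 1 := by
  split_ifs <;> norm_num

theorem cliffordSign_empty_left (T : Finset α) : cliffordSign ∅ T = 1 := prod_empty

theorem cliffordSign_empty_right (S : Finset α) : cliffordSign S ∅ = 1 := by
  simp [cliffordSign]

variable [DecidableEq α]

theorem cliffordSign_symmDiff_left (S S' T : Finset α) :
    cliffordSign (S ∆ S') T = cliffordSign S T * cliffordSign S' T :=
  prod_symmDiff_of_mul_self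
    (fun _ => by rw [← prod_mul_distrib]; exact prod_eq_one fun _ _ => ite_neg_one_mul_self _) S S'

theorem cliffordSign_symmDiff_right (S T T' : Finset α) :
    cliffordSign S (T ∆ T') = cliffordSign S T * cliffordSign S T' := by
  simp only [cliffordSign, prod_symmDiff_of_mul_self (fun _ => ite_neg_one_mul_self _),
    prod_mul_distrib]

end Sign

section Blocks

variable {ℓ n : ℕ}

def blockIndex : Fin ℓ × Fin n ↪ Fin (n * ℓ) :=
  (finProdFinEquiv.trans (finCongr (Nat.mul_comm ℓ n))).toEmbedding

theorem blockIndex_val (i : Fin ℓ) (r : Fin n) : (blockIndex (i, r) : ℕ) = r + n * i := by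
  simp [blockIndex]

theorem blockIndex_lt_of_lt {i j : Fin ℓ} (h : i < j) (r r' : Fin n) :
    blockIndex (i, r) < blockIndex (j, r') := by
  have : n * (i + 1) ≤ n * j := Nat.mul_le_mul_left n h
  rw [Fin.lt_def, blockIndex_val, blockIndex_val, Nat.mul_succ] at *
  have := r.2
  omega

theorem blockIndex_lt_blockIndex_iff (i : Fin ℓ) (r r' : Fin n) :
    blockIndex (i, r) < blockIndex (i, r') ↔ r < r' := by
  rw [Fin.lt_def, blockIndex_val, blockIndex_val, Fin.lt_def]
  omega

def block (P : Finset (Fin n)) (A : Finset (Fin ℓ)) : Finset (Fin (n * ℓ)) :=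
  (A ×ˢ P).map blockIndex

theorem card_block (P : Finset (Fin n)) (A : Finset (Fin ℓ)) : #(block P A) = #A * #P := by
  rw [block, card_map, card_product]

theorem block_empty (P : Finset (Fin n)) : block P (∅ : Finset (Fin ℓ)) = ∅ := by
  simp [block]

theorem block_symmDiff (P : Finset (Fin n)) (A B : Finset (Fin ℓ)) :
    block P (A ∆ B) = block P A ∆ block P B := by
  have : (A ∆ B) ×ˢ P = (A ×ˢ P) ∆ (B ×ˢ P) := by
    ext; simp only [mem_product, mem_symmDiff]; tauto
  rw [block, block, block, this, map_eq_image, map_eq_image, map_eq_image,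
    image_symmDiff _ _ blockIndex.injective]

theorem block_injective {P : Finset (Fin n)} (hP : P.Nonempty) :
    Function.Injective (block (ℓ := ℓ) P) := by
  intro A B h
  obtain ⟨r, hr⟩ := hP
  ext i
  have := congrArg (blockIndex (i, r) ∈ ·) h
  simpa [block, hr] using this

theorem cliffordSign_blockIndex_pair {P : Finset (Fin n)} (hP : Even #P) (Q : Finset (Fin n))
    (i j : Fin ℓ) :
    ∏ r ∈ P, ∏ r' ∈ Q, (if blockIndex (j, r') < blockIndex (i, r) then (-1 : ℝ) else 1) =
      if i = j then cliffordSign P Q else 1 := by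
  rcases lt_trichotomy i j with h | rfl | h
  · rw [if_neg h.ne]
    exact prod_eq_one fun r _ => prod_eq_one fun r' _ =>
      if_neg (blockIndex_lt_of_lt h r r').not_gt
  · simp only [blockIndex_lt_blockIndex_iff, if_true, cliffordSign]
  · rw [if_neg h.ne']
    simp only [blockIndex_lt_of_lt h, if_true, prod_const, ← pow_mul, (hP.mul_left _).neg_one_pow]

theorem cliffordSign_block {P : Finset (Fin n)} (hP : Even #P) (Q : Finset (Fin n))
    (A B : Finset (Fin ℓ)) :
    cliffordSign (block P A) (block Q B) = cliffordSign P Q ^ #(A ∩ B) := by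
  simp only [cliffordSign, block, prod_map, prod_product]
  rw [prod_congr rfl fun i _ => prod_comm]
  simp only [cliffordSign_blockIndex_pair hP, prod_ite_eq, prod_ite_mem, prod_const]
  rfl

end Blocks

/-- A type synonym, so that `*` is the Clifford product `clMul` rather than the pointwise one. -/
def CL (m : ℕ) : Type := Finset (Fin m) → ℝ

namespace CL

variable {m : ℕ}

instance : AddCommGroup (CL m) := inferInstanceAs (AddCommGroup (Finset (Fin m) → ℝ))
instance : Module ℝ (CL m) := inferInstanceAs (Module ℝ (Finset (Fin m) → ℝ))
instance : IsAddTorsionFree (CL m) := inferInstanceAs (IsAddTorsionFree (Finset (Fin m) → ℝ))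
noncomputable instance : Mul (CL m) := ⟨clMul⟩

theorem mul_apply (x y : CL m) (U : Finset (Fin m)) :
    (x * y) U = ∑ S, ∑ T, if S ∆ T = U then cliffordSign S T * x S * y T else 0 := by
  simp only [cliffordSign_eq_neg_one_pow]; rfl

theorem add_apply (x y : CL m) (U : Finset (Fin m)) : (x + y) U = x U + y U := rfl
theorem smul_apply (c : ℝ) (x : CL m) (U : Finset (Fin m)) : (c • x) U = c * x U := rfl
theorem sum_apply {ι : Type*} (s : Finset ι) (x : ι → CL m) (U : Finset (Fin m)) :
    (∑ i ∈ s, x i) U = ∑ i ∈ s, x i U :=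
  Finset.sum_apply (M := fun _ : Finset (Fin m) => ℝ) U s x

protected theorem add_mul (x y z : CL m) : (x + y) * z = x * z + y * z := by
  funext U
  simp only [mul_apply, add_apply, ← sum_add_distrib]
  refine sum_congr rfl fun S _ => sum_congr rfl fun T _ => ?_
  split_ifs <;> ring

protected theorem mul_add (x y z : CL m) : x * (y + z) = x * y + x * z := by
  funext U
  simp only [mul_apply, add_apply, ← sum_add_distrib]
  refine sum_congr rfl fun S _ => sum_congr rfl fun T _ => ?_
  split_ifs <;> ring

protected theorem smul_mul (c : ℝ) (x y : CL m) : (c • x) * y = c • (x * y) := by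
  funext U
  simp only [mul_apply, smul_apply, mul_sum]
  refine sum_congr rfl fun S _ => sum_congr rfl fun T _ => ?_
  split_ifs <;> ring

protected theorem mul_smul (c : ℝ) (x y : CL m) : x * (c • y) = c • (x * y) := by
  funext U
  simp only [mul_apply, smul_apply, mul_sum]
  refine sum_congr rfl fun S _ => sum_congr rfl fun T _ => ?_
  split_ifs <;> ring

instance : IsScalarTower ℝ (CL m) (CL m) := ⟨fun c x y => CL.smul_mul c x y⟩
instance : SMulCommClass ℝ (CL m) (CL m) := ⟨fun c x y => (CL.mul_smul c x y).symm⟩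

noncomputable instance : NonUnitalNonAssocRing (CL m) :=
  { (inferInstance : AddCommGroup (CL m)) with
    left_distrib := CL.mul_add
    right_distrib := CL.add_mul
    zero_mul := fun x => by simpa using CL.smul_mul 0 x x
    mul_zero := fun x => by simpa using CL.mul_smul 0 x x }

noncomputable def single (S : Finset (Fin m)) : CL m := Pi.single (M := fun _ => ℝ) S 1

theorem single_apply (S U : Finset (Fin m)) : single S U = if U = S then 1 else 0 :=
  Pi.single_apply S 1 U

theorem sum_smul_single (x : CL m) : ∑ S, x S • single S = x := by
  funext U
  simp only [sum_apply, smul_apply, single_apply, mul_ite, mul_one, mul_zero]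
  exact Fintype.sum_ite_eq U x

theorem single_mul_single (S T : Finset (Fin m)) :
    single S * single T = cliffordSign S T • single (S ∆ T) := by
  funext U
  rw [mul_apply, sum_eq_single S (fun S' _ h => by simp [single_apply, h]) (by simp),
    sum_eq_single T (fun T' _ h => by simp [single_apply, h]) (by simp)]
  simp [smul_apply, single_apply, eq_comm]

theorem mul_assoc_single (S T U : Finset (Fin m)) :
    single S * single T * single U = single S * (single T * single U) := by
  simp only [single_mul_single, smul_mul_assoc, mul_smul_comm, single_mul_single, smul_smul,
    symmDiff_assoc, cliffordSign_symmDiff_left, cliffordSign_symmDiff_right]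
  ring_nf

protected theorem mul_assoc (x y z : CL m) : x * y * z = x * (y * z) := by
  rw [← sum_smul_single x, ← sum_smul_single y, ← sum_smul_single z]
  simp only [sum_mul, mul_sum, smul_mul_assoc, mul_smul_comm, mul_assoc_single]

noncomputable instance : One (CL m) := ⟨single ∅⟩

theorem one_def : (1 : CL m) = single ∅ := rfl

theorem one_mul_single (S : Finset (Fin m)) : 1 * single S = single S := by
  rw [one_def, single_mul_single, cliffordSign_empty_left, one_smul]
  exact congrArg single (bot_symmDiff S)

theorem single_mul_one (S : Finset (Fin m)) : single S * 1 = single S := by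
  rw [one_def, single_mul_single, cliffordSign_empty_right, one_smul]
  exact congrArg single (symmDiff_bot S)

protected theorem one_mul (x : CL m) : 1 * x = x := by
  nth_rewrite 1 [← sum_smul_single x]
  simp only [mul_sum, mul_smul_comm, one_mul_single]
  exact sum_smul_single x

protected theorem mul_one (x : CL m) : x * 1 = x := by
  nth_rewrite 1 [← sum_smul_single x]
  simp only [sum_mul, smul_mul_assoc, single_mul_one]
  exact sum_smul_single x

noncomputable instance : Ring (CL m) :=
  { (inferInstance : NonUnitalNonAssocRing (CL m)) with
    mul_assoc := CL.mul_assoc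
    one_mul := CL.one_mul
    mul_one := CL.mul_one }

noncomputable instance : Algebra ℝ (CL m) :=
  Algebra.ofModule CL.smul_mul fun c x y => CL.mul_smul c x y

theorem even_card_symmDiff {S T : Finset (Fin m)} (hS : Even #S) (hT : Even #T) :
    Even #(S ∆ T) := by
  have h₁ := card_union_add_card_inter S T
  have h₂ : #(S ∪ T) = #(S ∆ T) + #(S ∩ T) := by
    have hd : Disjoint (S ∆ T) (S ∩ T) := disjoint_symmDiff_inf S T
    rw [← card_union_of_disjoint hd]
    exact congrArg card (symmDiff_sup_inf S T).symm
  rw [Nat.even_iff] at *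
  omega

def evenSubalgebra (m : ℕ) : Subalgebra ℝ (CL m) where
  carrier := {x | ∀ S : Finset (Fin m), Odd #S → x S = 0}
  mul_mem' {x y} hx hy U hU := by
    rw [mul_apply]
    refine sum_eq_zero fun S _ => sum_eq_zero fun T _ => ?_
    by_cases hS : Odd #S
    · rw [hx S hS, mul_zero, zero_mul, ite_self]
    by_cases hT : Odd #T
    · rw [hy T hT, mul_zero, ite_self]
    rw [if_neg]
    rintro rfl
    exact Nat.not_odd_iff_even.2 (even_card_symmDiff (Nat.not_odd_iff_even.1 hS)
      (Nat.not_odd_iff_even.1 hT)) hU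
  add_mem' hx hy S hS := by rw [add_apply, hx S hS, hy S hS, add_zero]
  algebraMap_mem' r S hS := by
    rw [Algebra.algebraMap_eq_smul_one, smul_apply, one_def, single_apply, if_neg, mul_zero]
    rintro rfl
    simp at hS

theorem single_mem_evenSubalgebra {S : Finset (Fin m)} (hS : Even #S) :
    single S ∈ evenSubalgebra m := fun U hU => by
  rw [single_apply, if_neg]
  rintro rfl
  exact Nat.not_odd_iff_even.2 hS hU

theorem sum_sq_apply_sum_single (s : Finset (Finset (Fin m))) :
    ∑ U, (∑ S ∈ s, single S) U ^ 2 = #s := by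
  simp only [sum_apply, single_apply, sum_ite_eq, ite_pow, one_pow, zero_pow two_ne_zero]
  rw [sum_ite_mem, univ_inter, sum_const, nsmul_one]

/-- Index sets of `σᵢ` and `τᵢ` inside a block of five generators. -/
def sigmaIdx : Finset (Fin 5) := {0, 1, 2, 3}
def tauIdx : Finset (Fin 5) := {0, 1, 2, 4}

theorem even_card_sigmaIdx : Even #sigmaIdx := by decide
theorem even_card_tauIdx : Even #tauIdx := by decide

theorem cliffordSign_sigmaIdx_sigmaIdx : cliffordSign sigmaIdx sigmaIdx = 1 := by
  rw [cliffordSign_eq_neg_one_pow, show #{p ∈ sigmaIdx ×ˢ sigmaIdx | p.2 < p.1} = 6 by decide]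
  norm_num

theorem cliffordSign_tauIdx_tauIdx : cliffordSign tauIdx tauIdx = 1 := by
  rw [cliffordSign_eq_neg_one_pow, show #{p ∈ tauIdx ×ˢ tauIdx | p.2 < p.1} = 6 by decide]
  norm_num

theorem cliffordSign_sigmaIdx_tauIdx : cliffordSign sigmaIdx tauIdx = 1 := by
  rw [cliffordSign_eq_neg_one_pow, show #{p ∈ sigmaIdx ×ˢ tauIdx | p.2 < p.1} = 6 by decide]
  norm_num

theorem cliffordSign_tauIdx_sigmaIdx : cliffordSign tauIdx sigmaIdx = -1 := by
  rw [cliffordSign_eq_neg_one_pow, show #{p ∈ tauIdx ×ˢ sigmaIdx | p.2 < p.1} = 7 by decide]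
  norm_num

variable {ℓ : ℕ}

noncomputable def sigma (A : Finset (Fin ℓ)) : CL (5 * ℓ) := single (block sigmaIdx A)
noncomputable def tau (A : Finset (Fin ℓ)) : CL (5 * ℓ) := single (block tauIdx A)
/-- `e = ∏ᵢ (1 + σᵢ)/2`, expanded. -/
noncomputable def idem (ℓ : ℕ) : CL (5 * ℓ) := (2 ^ ℓ : ℝ)⁻¹ • ∑ A, sigma A

theorem single_block_mul_single_block {n : ℕ} {P : Finset (Fin n)} (hP : Even #P)
    (A B : Finset (Fin ℓ)) :
    single (block P A) * single (block P B) =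
      cliffordSign P P ^ #(A ∩ B) • single (block P (A ∆ B)) := by
  rw [single_mul_single, cliffordSign_block hP, block_symmDiff]

theorem sigma_mul_sigma (A B : Finset (Fin ℓ)) : sigma A * sigma B = sigma (A ∆ B) := by
  rw [sigma, sigma, single_block_mul_single_block even_card_sigmaIdx,
    cliffordSign_sigmaIdx_sigmaIdx, one_pow, one_smul, sigma]

theorem tau_mul_tau (A B : Finset (Fin ℓ)) : tau A * tau B = tau (A ∆ B) := by
  rw [tau, tau, single_block_mul_single_block even_card_tauIdx,
    cliffordSign_tauIdx_tauIdx, one_pow, one_smul, tau]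

theorem tau_empty : tau (∅ : Finset (Fin ℓ)) = 1 := by
  rw [tau, block_empty]
  rfl

theorem sigma_singleton_mul_tau {i : Fin ℓ} {C : Finset (Fin ℓ)} (hi : i ∈ C) :
    sigma {i} * tau C = -(tau C * sigma {i}) := by
  rw [sigma, tau, single_mul_single, single_mul_single, cliffordSign_block even_card_sigmaIdx,
    cliffordSign_block even_card_tauIdx, cliffordSign_sigmaIdx_tauIdx,
    cliffordSign_tauIdx_sigmaIdx, symmDiff_comm, inter_singleton_of_mem hi, card_singleton]
  simp

theorem sigma_mul_idem (A : Finset (Fin ℓ)) : sigma A * idem ℓ = idem ℓ := by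
  rw [idem, mul_smul_comm, mul_sum]
  simp only [sigma_mul_sigma]
  congr 1
  exact Fintype.sum_bijective _ (symmDiff_right_involutive A).bijective _ _ fun _ => rfl

theorem idem_mul_sigma (A : Finset (Fin ℓ)) : idem ℓ * sigma A = idem ℓ := by
  rw [idem, smul_mul_assoc, sum_mul]
  simp only [sigma_mul_sigma]
  congr 1
  exact Fintype.sum_bijective _ (symmDiff_left_involutive A).bijective _ _ fun _ => rfl

theorem idem_mul_idem : idem ℓ * idem ℓ = idem ℓ := by
  nth_rewrite 2 [idem]
  rw [mul_smul_comm, mul_sum]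
  simp only [idem_mul_sigma, sum_const, card_univ, Fintype.card_finset, Fintype.card_fin,
    ← Nat.cast_smul_eq_nsmul ℝ, smul_smul, Nat.cast_pow, Nat.cast_ofNat]
  rw [inv_mul_cancel₀ (by positivity), one_smul]

theorem idem_mul_tau_mul_idem {C : Finset (Fin ℓ)} (hC : C.Nonempty) :
    idem ℓ * tau C * idem ℓ = 0 := by
  obtain ⟨i, hi⟩ := hC
  refine self_eq_neg.mp ?_
  calc idem ℓ * tau C * idem ℓ = idem ℓ * (tau C * sigma {i}) * idem ℓ := by
        simp only [mul_assoc, sigma_mul_idem]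
    _ = -(idem ℓ * sigma {i} * tau C * idem ℓ) := by
        rw [← neg_neg (tau C * sigma {i}), ← sigma_singleton_mul_tau hi]
        noncomm_ring
    _ = -(idem ℓ * tau C * idem ℓ) := by rw [idem_mul_sigma]

theorem idem_mul_tau_mul_tau_mul_idem (A B : Finset (Fin ℓ)) :
    idem ℓ * tau A * (tau B * idem ℓ) = if A = B then idem ℓ else 0 := by
  rw [← mul_assoc, mul_assoc (idem ℓ), tau_mul_tau]
  split_ifs with h
  · rw [h, symmDiff_self, bot_eq_empty, tau_empty, mul_one, idem_mul_idem]
  · exact idem_mul_tau_mul_idem (symmDiff_nonempty.2 h)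

theorem idem_mem_evenSubalgebra : idem ℓ ∈ evenSubalgebra (5 * ℓ) :=
  Subalgebra.smul_mem _ (Subalgebra.sum_mem _ fun A _ =>
    single_mem_evenSubalgebra (by rw [card_block]; exact even_card_sigmaIdx.mul_left _)) _

theorem tau_mem_evenSubalgebra (A : Finset (Fin ℓ)) : tau A ∈ evenSubalgebra (5 * ℓ) :=
  single_mem_evenSubalgebra (by rw [card_block]; exact even_card_tauIdx.mul_left _)

theorem sum_sq_idem : ∑ S, idem ℓ S ^ 2 = 1 / 2 ^ ℓ := by
  have hinj : Function.Injective (block (ℓ := ℓ) sigmaIdx) := block_injective ⟨0, by decide⟩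
  have hsum : ∑ A, sigma A = ∑ S ∈ univ.image (block (ℓ := ℓ) sigmaIdx), single S :=
    (sum_image fun A _ B _ h => hinj h).symm
  simp only [idem, smul_apply, mul_pow, ← mul_sum, hsum, sum_sq_apply_sum_single,
    card_image_of_injective _ hinj, card_univ, Fintype.card_finset, Fintype.card_fin]
  field_simp
  norm_num

end CL

/-- For `n = 2^ℓ` and `m = 5ℓ`, there exist `h_1,…,h_n, h'_1,…,h'_n` and an idempotent
`e` in the even Clifford algebra `CL_m` (all coefficients on odd-cardinality basis
elements vanish) with `h_j h'_j = e` for all `j`, `h_j h'_k = 0` for `j ≠ k`, and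
`|e|² = Σ_S c_S(e)² = 1/2^ℓ`. -/
theorem exists_clifford_system (ℓ : ℕ) :
    ∃ (h h' : Fin (2 ^ ℓ) → (Finset (Fin (5 * ℓ)) → ℝ)) (e : Finset (Fin (5 * ℓ)) → ℝ),
      (∀ j S, Odd S.card → h j S = 0) ∧
      (∀ j S, Odd S.card → h' j S = 0) ∧
      (∀ S, Odd S.card → e S = 0) ∧
      (∀ j, clMul (h j) (h' j) = e) ∧
      (∀ j k, j ≠ k → clMul (h j) (h' k) = 0) ∧
      clMul e e = e ∧
      (∑ S : Finset (Fin (5 * ℓ)), (e S) ^ 2) = 1 / 2 ^ ℓ := by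
  let idx : Fin (2 ^ ℓ) ≃ Finset (Fin ℓ) := (Fintype.equivFinOfCardEq (by simp)).symm
  refine ⟨fun j => CL.idem ℓ * CL.tau (idx j), fun j => CL.tau (idx j) * CL.idem ℓ, CL.idem ℓ,
    fun _ => mul_mem CL.idem_mem_evenSubalgebra (CL.tau_mem_evenSubalgebra _),
    fun _ => mul_mem (CL.tau_mem_evenSubalgebra _) CL.idem_mem_evenSubalgebra,
    CL.idem_mem_evenSubalgebra, fun j => ?_, fun j k hjk => ?_, CL.idem_mul_idem, CL.sum_sq_idem⟩
  · exact (CL.idem_mul_tau_mul_tau_mul_idem _ _).trans (if_pos rfl)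
  · exact (CL.idem_mul_tau_mul_tau_mul_idem _ _).trans (if_neg (idx.injective.ne hjk))
end
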